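/- Suppose G is a torsion-free abelian group containing no isomorphic copy of ℚ. Let a : ℕ → ℤ satisfy n! ∣ a(n) for all n (i.e., a ∈ S*), and let c : ℕ → G be any sequence of elements of G. Then there is at most one y ∈ G such that for every n ∈ ℕ, n! divides (y - Σ_{l<n} a(l) • c(l)) in G. -/

import Mathlib

/-- A group `G` is torsion-free: `n • x ≠ 0` for every `x ≠ 0` and integer `n > 0`. -/
def IsTorsionFreeGroup (G : Type*) [AddCommGroup G] : Prop :=
  ∀ x : G, x ≠ 0 → ∀ n : ℤ, 0 < n → n • x ≠ 0

/-- `G` contains a subgroup isomorphic to `A`. -/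
def ContainsCopy (A G : Type*) [AddCommGroup A] [AddCommGroup G] : Prop :=
  ∃ f : A →+ G, Function.Injective f

/-- `S* = {a : ℕ → ℤ | ∀ n, n! ∣ a n}`. -/
def Sstar : Set (ℕ → ℤ) := {a | ∀ n : ℕ, (n.factorial : ℤ) ∣ a n}

/-- The formula `φ_a(y; c)`: for every `n`, `n!` divides `y - Σ_{l<n} a l • c l` in `G`. -/
def PhiFormula {G : Type*} [AddCommGroup G] (a : ℕ → ℤ) (c : ℕ → G) (y : G) : Prop :=
  ∀ n : ℕ, ∃ z : G, (n.factorial : ℤ) • z = y - ∑ l ∈ Finset.range n, a l • c l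

/-!
If `y₁` and `y₂` both satisfy `φ_a(·; c)`, their difference `d` is divisible by every `n!`, hence by
every nonzero integer `k`. In a torsion-free group the solution `w_k` of `k • w_k = d` is unique, so
`q ↦ q.num • w_{q.den}` is a well-defined additive map `ℚ → G`, and it is injective when `d ≠ 0`.
-/

open Nat

theorem IsTorsionFreeGroup.isAddTorsionFree {G : Type*} [AddCommGroup G]
    (hG : IsTorsionFreeGroup G) : IsAddTorsionFree G where
  nsmul_right_injective n hn x y hxy := by
    by_contra hne
    refine hG (x - y) (sub_ne_zero.mpr hne) n (by omega) ?_
    rw [natCast_zsmul, nsmul_sub, sub_eq_zero]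
    exact hxy

section

variable {G : Type*} [AddCommGroup G] {d : G}

theorem exists_zsmul_eq_of_forall_factorial_zsmul_eq (hd : ∀ n : ℕ, ∃ z : G, (n ! : ℤ) • z = d)
    {k : ℤ} (hk : k ≠ 0) : ∃ z : G, k • z = d := by
  obtain ⟨z, hz⟩ := hd k.natAbs
  have hk_dvd : k ∣ (k.natAbs ! : ℤ) :=
    Int.natAbs_dvd.mp (Int.natCast_dvd_natCast.mpr (dvd_factorial (Int.natAbs_pos.mpr hk) le_rfl))
  obtain ⟨t, ht⟩ := hk_dvd
  exact ⟨t • z, by rw [smul_smul, ← ht, hz]⟩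

variable [IsAddTorsionFree G]

theorem exists_addMonoidHom_rat_of_forall_zsmul_eq (hd : ∀ k : ℤ, k ≠ 0 → ∃ z : G, k • z = d) :
    ∃ f : ℚ →+ G, ∀ q : ℚ, (q.den : ℤ) • f q = q.num • d := by
  choose w hw using hd
  let f (q : ℚ) : G := q.num • w q.den (mod_cast q.den_ne_zero)
  have hf (q : ℚ) : (q.den : ℤ) • f q = q.num • d := by rw [smul_comm, hw]
  have hf_of_mul_eq (q : ℚ) {k m : ℤ} (hqk : q * k = m) : k • f q = m • d := by
    refine zsmul_right_injective (mod_cast q.den_ne_zero : (q.den : ℤ) ≠ 0) ?_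
    simp only [smul_comm (q.den : ℤ) k, hf, smul_smul]
    congr 1
    have : (k * q.num : ℚ) = q.den * m := by rw [← hqk, ← Rat.mul_den_eq_num]; ring
    exact_mod_cast this
  refine ⟨AddMonoidHom.mk' f fun p q => ?_, hf⟩
  have hk : (p.den * q.den : ℤ) ≠ 0 := by positivity
  refine zsmul_right_injective hk ?_
  simp only [smul_add]
  rw [hf_of_mul_eq (p + q) (m := p.num * q.den + q.num * p.den),
    hf_of_mul_eq p (m := p.num * q.den), hf_of_mul_eq q (m := q.num * p.den), add_smul]
  all_goals push_cast; simp only [← Rat.mul_den_eq_num]; ring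

theorem containsCopy_rat_of_forall_factorial_zsmul_eq (hd₀ : d ≠ 0)
    (hd : ∀ n : ℕ, ∃ z : G, (n ! : ℤ) • z = d) : ContainsCopy ℚ G := by
  obtain ⟨f, hf⟩ := exists_addMonoidHom_rat_of_forall_zsmul_eq
    fun _ hk => exists_zsmul_eq_of_forall_factorial_zsmul_eq hd hk
  refine ⟨f, (injective_iff_map_eq_zero f).mpr fun q hq => ?_⟩
  have hnum : q.num • d = 0 := by rw [← hf, hq, smul_zero]
  rw [IsAddTorsionFree.zsmul_eq_zero_iff_left hd₀, Rat.num_eq_zero] at hnum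
  exact hnum

end

theorem PhiFormula.exists_factorial_zsmul_eq_sub {G : Type*} [AddCommGroup G] {a : ℕ → ℤ}
    {c : ℕ → G} {y₁ y₂ : G} (h₁ : PhiFormula a c y₁) (h₂ : PhiFormula a c y₂) (n : ℕ) :
    ∃ z : G, (n ! : ℤ) • z = y₁ - y₂ := by
  obtain ⟨z₁, hz₁⟩ := h₁ n
  obtain ⟨z₂, hz₂⟩ := h₂ n
  exact ⟨z₁ - z₂, by rw [smul_sub, hz₁, hz₂, sub_sub_sub_cancel_right]⟩

theorem phi_unique_general (G : Type*) [AddCommGroup G]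
    (hG : IsTorsionFreeGroup G) (hQ : ¬ ContainsCopy ℚ G)
    (a : ℕ → ℤ) (c : ℕ → G) :
    ∀ y₁ y₂ : G, PhiFormula a c y₁ → PhiFormula a c y₂ → y₁ = y₂ := by
  intro y₁ y₂ h₁ h₂
  have := hG.isAddTorsionFree
  by_contra hne
  exact hQ (containsCopy_rat_of_forall_factorial_zsmul_eq (sub_ne_zero.mpr hne)
    (h₁.exists_factorial_zsmul_eq_sub h₂))

/-- In a torsion-free group with no copy of `ℚ`, there is at most one `y`
satisfying `φ_a(y; c)`. -/
theorem phi_unique (G : Type*) [AddCommGroup G]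
    (hG : IsTorsionFreeGroup G) (hQ : ¬ ContainsCopy ℚ G)
    (a : ℕ → ℤ) (ha : a ∈ Sstar) (c : ℕ → G) :
    ∀ y₁ y₂ : G, PhiFormula a c y₁ → PhiFormula a c y₂ → y₁ = y₂ :=
  phi_unique_general G hG hQ a c
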